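/- arXiv:2106.07731 — 3 statements merged into one kernel-verified Lean document; each statement's English description precedes it below -/
import Mathlib

section
/- Schwartz–Zippel-type zero-counting: Let P be a nonzero polynomial in v variables over a field F, and let d_j be defined inductively as the degree of α_j in the polynomial P_j obtained as the leading coefficient chain (P_1 = P, P_{j+1} = coefficient of α_j^{d_j} in P_j). If S_1,...,S_v are finite subsets of F, then P has at most |S_1 × ... × S_v| · (d_1/|S_1| + ... + d_v/|S_v|) zeros in S_1 × ... × S_v. -/
/-!
View `P` as a polynomial in `α_1` over `F[α_2, …, α_v]`: its degree is `d_1` and its leading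
coefficient is `P_2`, whose leading-coefficient chain is that of `P` with the first step dropped
(after renaming `α_{j+1}` to `α_j`). Fibre the box over `y ∈ S_2 × ⋯ × S_v`. If `P_2(y) = 0`,
which by induction happens for at most `|S_2 × ⋯ × S_v| · (d_2/|S_2| + ⋯ + d_v/|S_v|)` points,
count all `|S_1|` points of the fibre; otherwise `P(·, y)` is a nonzero polynomial of degree
`d_1` and has at most `d_1` roots in `S_1`.
-/

open Finset

/-- The coefficient of `α_j^d` in `P`, viewed as a polynomial in the variable `α_j`
(a multivariate polynomial in the remaining variables). -/
noncomputable def coeffOfVar {F : Type*} [CommRing F] {v : ℕ} (j : Fin v) (d : ℕ)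
    (P : MvPolynomial (Fin v) F) : MvPolynomial (Fin v) F :=
  ∑ m ∈ P.support.filter (fun m => m j = d),
    MvPolynomial.monomial (m - Finsupp.single j d) (P.coeff m)

theorem Finsupp.mapDomain_succ_eq_cons {M : Type*} [AddCommMonoid M] {n : ℕ} (s : Fin n →₀ M) :
    s.mapDomain Fin.succ = cons 0 s := by
  ext i
  refine Fin.cases ?_ (fun i => ?_) i
  · rw [cons_zero, mapDomain_of_notMem_range]
    simp
  · rw [cons_succ, mapDomain_apply (Fin.succ_injective n)]

theorem Fin.sum_piFinset_succ {M α : Type*} [AddCommMonoid M] {n : ℕ}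
    (S : Fin (n + 1) → Finset α) (G : (Fin (n + 1) → α) → M) :
    ∑ x ∈ Fintype.piFinset S, G x =
      ∑ y ∈ Fintype.piFinset (Fin.tail S), ∑ t ∈ S 0, G (Fin.cons t y) := by
  have hbox := map_consEquiv_filter_piFinset S (fun _ => True)
  simp only [filter_true] at hbox
  rw [← sum_product_right (f := fun p => G (Fin.cons p.1 p.2)), ← hbox, sum_map]
  simp

namespace MvPolynomial

variable {R : Type*} [CommRing R] {n : ℕ}

theorem coeff_coeffOfVar (j : Fin n) (e : ℕ) (P : MvPolynomial (Fin n) R) (m : Fin n →₀ ℕ) :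
    (coeffOfVar j e P).coeff m = if m j = 0 then P.coeff (m + Finsupp.single j e) else 0 := by
  classical
  simp only [coeffOfVar, coeff_sum, coeff_monomial]
  split_ifs with hm
  · rw [sum_eq_single (m + Finsupp.single j e)]
    · simp
    · intro u hu hne
      rw [mem_filter] at hu
      refine if_neg fun hum => hne ?_
      rw [← hum, tsub_add_cancel_of_le (Finsupp.single_le_iff.2 hu.2.ge)]
    · intro hnot
      simp_all
  · refine sum_eq_zero fun u hu => if_neg ?_
    rintro rfl
    exact hm (by simp [(mem_filter.1 hu).2])

theorem coeff_rename_succ (P : MvPolynomial (Fin n) R) (m : Fin (n + 1) →₀ ℕ) :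
    (rename Fin.succ P).coeff m = if m 0 = 0 then P.coeff m.tail else 0 := by
  split_ifs with hm
  · conv_lhs => rw [← Finsupp.cons_tail m, hm, ← Finsupp.mapDomain_succ_eq_cons]
    exact coeff_rename_mapDomain _ (Fin.succ_injective n) _ _
  · refine coeff_rename_eq_zero _ _ _ fun u hu => absurd ?_ hm
    rw [← hu, Finsupp.mapDomain_succ_eq_cons, Finsupp.cons_zero]

theorem coeffOfVar_zero (e : ℕ) (P : MvPolynomial (Fin (n + 1)) R) :
    coeffOfVar 0 e P = rename Fin.succ ((finSuccEquiv R n P).coeff e) := by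
  ext m
  rw [coeff_coeffOfVar, coeff_rename_succ, finSuccEquiv_coeff_coeff]
  split_ifs with hm
  · congr 1
    ext i
    refine Fin.cases ?_ (fun i => ?_) i <;> simp [hm, Finsupp.tail_apply]
  · rfl

theorem coeffOfVar_succ_rename (j : Fin n) (e : ℕ) (P : MvPolynomial (Fin n) R) :
    coeffOfVar j.succ e (rename Fin.succ P) = rename Fin.succ (coeffOfVar j e P) := by
  ext m
  rw [coeff_coeffOfVar, coeff_rename_succ, coeff_rename_succ, coeff_coeffOfVar]
  have htail : (m + Finsupp.single j.succ e).tail = m.tail + Finsupp.single j e := by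
    ext i; simp [Finsupp.tail_apply, Finsupp.single_apply]
  by_cases h0 : m 0 = 0 <;> by_cases hj : m j.succ = 0 <;>
    simp [Finsupp.tail_apply, htail, h0, hj, Fin.succ_ne_zero]

noncomputable def leadingCoeffIn (j : Fin n) (P : MvPolynomial (Fin n) R) : MvPolynomial (Fin n) R :=
  coeffOfVar j (degreeOf j P) P

theorem leadingCoeffIn_zero (P : MvPolynomial (Fin (n + 1)) R) :
    leadingCoeffIn 0 P = rename Fin.succ (finSuccEquiv R n P).leadingCoeff := by
  rw [leadingCoeffIn, coeffOfVar_zero, Polynomial.leadingCoeff, natDegree_finSuccEquiv]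

theorem leadingCoeffIn_succ_rename (j : Fin n) (P : MvPolynomial (Fin n) R) :
    leadingCoeffIn j.succ (rename Fin.succ P) = rename Fin.succ (leadingCoeffIn j P) := by
  rw [leadingCoeffIn, leadingCoeffIn, degreeOf_rename_of_injective (Fin.succ_injective n),
    coeffOfVar_succ_rename]

noncomputable def leadingCoeffChain (P : MvPolynomial (Fin n) R) : ℕ → MvPolynomial (Fin n) R
  | 0 => P
  | k + 1 => if h : k < n then leadingCoeffIn ⟨k, h⟩ (leadingCoeffChain P k) else 0

theorem leadingCoeffChain_succ (P : MvPolynomial (Fin (n + 1)) R) (k : ℕ) :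
    leadingCoeffChain P (k + 1) =
      rename Fin.succ (leadingCoeffChain (finSuccEquiv R n P).leadingCoeff k) := by
  induction k with
  | zero => simp [leadingCoeffChain, leadingCoeffIn_zero]
  | succ k ih =>
    by_cases hk : k < n
    · rw [leadingCoeffChain, dif_pos (Nat.succ_lt_succ hk), ih, leadingCoeffChain, dif_pos hk,
        ← leadingCoeffIn_succ_rename]
      rfl
    · rw [leadingCoeffChain, dif_neg (by omega), leadingCoeffChain, dif_neg hk, map_zero]

theorem degreeOf_leadingCoeffChain_succ (P : MvPolynomial (Fin (n + 1)) R) (j : Fin n) :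
    degreeOf j.succ (leadingCoeffChain P j.succ) =
      degreeOf j (leadingCoeffChain (finSuccEquiv R n P).leadingCoeff j) := by
  rw [Fin.val_succ, leadingCoeffChain_succ, degreeOf_rename_of_injective (Fin.succ_injective n)]

variable [IsDomain R] [DecidableEq R]

theorem card_filter_eval_cons_eq_zero_le (P : MvPolynomial (Fin (n + 1)) R) {y : Fin n → R}
    (hy : eval y (finSuccEquiv R n P).leadingCoeff ≠ 0) (s : Finset R) :
    #{t ∈ s | eval (Fin.cons t y) P = 0} ≤ degreeOf 0 P := by
  set q := (finSuccEquiv R n P).map (eval y)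
  have hdeg : q.natDegree = degreeOf 0 P := by
    rw [Polynomial.natDegree_map_of_leadingCoeff_ne_zero _ hy, natDegree_finSuccEquiv]
  have hq : q ≠ 0 := Polynomial.leadingCoeff_ne_zero.1 <| by
    rwa [Polynomial.leadingCoeff_map_of_leadingCoeff_ne_zero _ hy]
  rw [← hdeg]
  refine Polynomial.card_le_degree_of_subset_roots fun t ht => ?_
  rw [mem_val, mem_filter, eval_eq_eval_mv_eval'] at ht
  exact (Polynomial.mem_roots hq).2 ht.2

theorem card_filter_eval_eq_zero_le_leadingCoeff (P : MvPolynomial (Fin (n + 1)) R)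
    (S : Fin (n + 1) → Finset R) :
    #{x ∈ Fintype.piFinset S | eval x P = 0} ≤
      #(S 0) * #{y ∈ Fintype.piFinset (Fin.tail S) | eval y (finSuccEquiv R n P).leadingCoeff = 0}
        + degreeOf 0 P * #(Fintype.piFinset (Fin.tail S)) := by
  set L := (finSuccEquiv R n P).leadingCoeff
  rw [card_filter, Fin.sum_piFinset_succ]
  simp_rw [← card_filter]
  calc _ ≤ ∑ y ∈ Fintype.piFinset (Fin.tail S), if eval y L = 0 then #(S 0) else degreeOf 0 P := by
        refine sum_le_sum fun y _ => ?_
        split_ifs with hy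
        · exact card_filter_le _ _
        · exact card_filter_eval_cons_eq_zero_le P hy _
    _ ≤ _ := by
        rw [sum_ite, sum_const, sum_const, smul_eq_mul, smul_eq_mul, mul_comm _ #(S 0),
          mul_comm _ (degreeOf 0 P)]
        gcongr
        exact filter_subset _ _

theorem schwartz_zippel_leadingCoeffChain (P : MvPolynomial (Fin n) R) (hP : P ≠ 0)
    (S : Fin n → Finset R) :
    (#{x ∈ Fintype.piFinset S | eval x P = 0} : ℚ) ≤
      (∏ j, (#(S j) : ℚ)) * ∑ j, (degreeOf j (leadingCoeffChain P j) : ℚ) / #(S j) := by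
  induction n with
  | zero =>
    rw [P.eq_C_of_isEmpty] at hP ⊢
    simp [C_ne_zero.1 hP]
  | succ n ih =>
    obtain hS0 | hS0 := (S 0).eq_empty_or_nonempty
    · rw [Fintype.piFinset_eq_empty.2 ⟨0, hS0⟩, filter_empty, card_empty, Nat.cast_zero]
      positivity
    set L := (finSuccEquiv R n P).leadingCoeff
    have hL : L ≠ 0 := by simpa [L] using hP
    have hstep : (#{x ∈ Fintype.piFinset S | eval x P = 0} : ℚ) ≤
        #(S 0) * #{y ∈ Fintype.piFinset (Fin.tail S) | eval y L = 0}
          + degreeOf 0 P * ∏ j : Fin n, (#(S j.succ) : ℚ) := by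
      have h := card_filter_eval_eq_zero_le_leadingCoeff P S
      rw [Fintype.card_piFinset] at h
      exact_mod_cast h
    have hS0_pos : (0 : ℚ) < #(S 0) := by exact_mod_cast hS0.card_pos
    have hL_zeros := ih L hL (Fin.tail S)
    simp only [Fin.tail] at hL_zeros
    rw [Fin.prod_univ_succ, Fin.sum_univ_succ, Fin.val_zero]
    simp only [degreeOf_leadingCoeffChain_succ]
    set T : ℚ := ∏ j : Fin n, (#(S j.succ) : ℚ)
    calc _ ≤ _ := hstep
      _ ≤ #(S 0) * (T * ∑ j, (degreeOf j (leadingCoeffChain L j) : ℚ) / #(S j.succ))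
          + degreeOf 0 P * T := by gcongr
      _ = _ := by rw [leadingCoeffChain]; field_simp; ring

end MvPolynomial

theorem schwartz_zippel_count_general {F : Type*} [Field F] [DecidableEq F] {v : ℕ}
    (P : MvPolynomial (Fin v) F) (hP : P ≠ 0)
    (Q : ℕ → MvPolynomial (Fin v) F) (d : Fin v → ℕ)
    (hQ0 : Q 0 = P)
    (hd : ∀ j : Fin v, d j = MvPolynomial.degreeOf j (Q j))
    (hQ : ∀ j : Fin v, Q ((j : ℕ) + 1) = coeffOfVar j (d j) (Q (j : ℕ)))
    (S : Fin v → Finset F) :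
    (((Fintype.piFinset S).filter (fun f => MvPolynomial.eval f P = 0)).card : ℚ)
      ≤ (∏ j : Fin v, ((S j).card : ℚ)) * ∑ j : Fin v, (d j : ℚ) / ((S j).card : ℚ) := by
  have hchain : ∀ k < v, Q k = MvPolynomial.leadingCoeffChain P k := by
    intro k hk
    induction k with
    | zero => exact hQ0
    | succ k ih =>
      calc Q (k + 1) = coeffOfVar ⟨k, by omega⟩ (d ⟨k, by omega⟩) (Q k) := hQ ⟨k, by omega⟩
        _ = MvPolynomial.leadingCoeffChain P (k + 1) := by
          rw [hd, ih (by omega), MvPolynomial.leadingCoeffChain, dif_pos (by omega)]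
          rfl
  have hd' : ∀ j, d j = MvPolynomial.degreeOf j (MvPolynomial.leadingCoeffChain P j) := fun j => by
    rw [hd, hchain j j.isLt]
  simp only [hd']
  exact MvPolynomial.schwartz_zippel_leadingCoeffChain P hP S

/-- Schwartz–Zippel-type zero counting: let `P` be a nonzero polynomial in `v` variables,
with `d_j` the degree of `α_j` in the iterated leading-coefficient chain
`P_1 = P`, `P_{j+1} = coefficient of α_j^{d_j} in P_j`. For finite nonempty sets
`S_1, …, S_v ⊆ F`, the number of zeros of `P` in `S_1 × ⋯ × S_v` is at most
`|S_1 × ⋯ × S_v| · (d_1/|S_1| + ⋯ + d_v/|S_v|)`. -/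
theorem schwartz_zippel_count {F : Type*} [Field F] [DecidableEq F] {v : ℕ}
    (P : MvPolynomial (Fin v) F) (hP : P ≠ 0)
    (Q : ℕ → MvPolynomial (Fin v) F) (d : Fin v → ℕ)
    (hQ0 : Q 0 = P)
    (hd : ∀ j : Fin v, d j = MvPolynomial.degreeOf j (Q j))
    (hQ : ∀ j : Fin v, Q ((j : ℕ) + 1) = coeffOfVar j (d j) (Q (j : ℕ)))
    (S : Fin v → Finset F) (hS : ∀ j, (S j).Nonempty) :
    (((Fintype.piFinset S).filter (fun f => MvPolynomial.eval f P = 0)).card : ℚ)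
      ≤ (∏ j : Fin v, ((S j).card : ℚ)) * ∑ j : Fin v, (d j : ℚ) / ((S j).card : ℚ) :=
  schwartz_zippel_count_general P hP Q d hQ0 hd hQ S
end

section
/- The set of derivative orders of the pivot node remains a lower set after coalescence: if U₁ = {(a,b) ∈ ℕ² : (a,b) ≤ (p_x, p_y) componentwise-lexicographically bounded, forming a lower set} is a lower set in ℕ² (under the partial order (a,b) ≤ (c,d) iff a ≤ c and b ≤ d) and n additional elements are inserted into ℕ² so that the resulting set of |U₁| + n elements is required to be a lower set with respect to this partial order, then among all lower sets of that cardinality containing U₁ obtained by shifts minimizing the total shift order, the resulting set is unique. -/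
open Finset

/-- Height bound of column `i` of the derivative order space: columns `0, …, K+T−1`
have height `L`, later columns have height `m`. -/
def colBound (K T L m i : ℕ) : ℕ := if i < K + T then L else m

/-- The derivative order space (region): columns `0, …, 2K+2T−2`, column `i` containing
the derivative orders `(i, j)` with `j < colBound K T L m i`. -/
def region (K T L m : ℕ) : Finset (ℕ × ℕ) :=
  ((Finset.range (2 * K + 2 * T - 1)) ×ˢ (Finset.range L)).filter
    (fun p => p.2 < colBound K T L m p.1)

/-- `S` fills columns greedily in order: if some later column `i'` is inhabited, then
every earlier column `i` is full up to its height bound. -/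
def FillsGreedily (K T L m : ℕ) (S : Finset (ℕ × ℕ)) : Prop :=
  ∀ i i' j', i < i' → (i', j') ∈ S → ∀ j < colBound K T L m i, (i, j) ∈ S

/-!
An element of `S₁ \ S₂` cannot lie in a column before an inhabited column of `S₂`, since
`S₂` fills that earlier column completely. So if neither set contained the other, the
witnesses of `S₁ \ S₂` and `S₂ \ S₁` would sit in the same column, where two lower sets are
nested. Hence `S₁` and `S₂` are nested, and equal cardinality makes them equal.
-/

variable {K T L m : ℕ} {S₁ S₂ : Finset (ℕ × ℕ)}

theorem FillsGreedily.fst_le_of_mem_sdiff (hg₂ : FillsGreedily K T L m S₂)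
    (hS₁ : S₁ ⊆ region K T L m) {a b : ℕ × ℕ} (ha : a ∈ S₁ \ S₂) (hb : b ∈ S₂) :
    b.1 ≤ a.1 := by
  by_contra! hlt
  obtain ⟨ha₁, ha₂⟩ := mem_sdiff.1 ha
  exact ha₂ (hg₂ a.1 b.1 b.2 hlt hb a.2 (mem_filter.1 (hS₁ ha₁)).2)

theorem subset_or_subset_of_fillsGreedily (hS₁ : S₁ ⊆ region K T L m)
    (hS₂ : S₂ ⊆ region K T L m) (hlow₁ : IsLowerSet (S₁ : Set (ℕ × ℕ)))
    (hlow₂ : IsLowerSet (S₂ : Set (ℕ × ℕ))) (hg₁ : FillsGreedily K T L m S₁)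
    (hg₂ : FillsGreedily K T L m S₂) : S₁ ⊆ S₂ ∨ S₂ ⊆ S₁ := by
  by_contra! hnot
  obtain ⟨a, ha⟩ := sdiff_nonempty.2 hnot.1
  obtain ⟨b, hb⟩ := sdiff_nonempty.2 hnot.2
  obtain ⟨ha₁, ha₂⟩ := mem_sdiff.1 ha
  obtain ⟨hb₂, hb₁⟩ := mem_sdiff.1 hb
  have hcol : a.1 = b.1 :=
    le_antisymm (hg₁.fst_le_of_mem_sdiff hS₂ hb ha₁) (hg₂.fst_le_of_mem_sdiff hS₁ ha hb₂)
  rcases le_total a.2 b.2 with hab | hba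
  · exact ha₂ (hlow₂ (Prod.le_def.2 ⟨hcol.le, hab⟩) hb₂)
  · exact hb₁ (hlow₁ (Prod.le_def.2 ⟨hcol.ge, hba⟩) ha₁)

theorem lowerSet_coalescence_unique_general (K T L m n : ℕ)
    (U S₁ S₂ : Finset (ℕ × ℕ))
    (hS1reg : S₁ ⊆ region K T L m) (hS2reg : S₂ ⊆ region K T L m)
    (hlow1 : IsLowerSet (S₁ : Set (ℕ × ℕ))) (hlow2 : IsLowerSet (S₂ : Set (ℕ × ℕ)))
    (hg1 : FillsGreedily K T L m S₁) (hg2 : FillsGreedily K T L m S₂)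
    (hc1 : S₁.card = U.card + n) (hc2 : S₂.card = U.card + n) :
    S₁ = S₂ := by
  rcases subset_or_subset_of_fillsGreedily hS1reg hS2reg hlow1 hlow2 hg1 hg2 with h | h
  · exact eq_of_subset_of_card_le h (hc2.trans hc1.symm).le
  · exact (eq_of_subset_of_card_le h (hc1.trans hc2.symm).le).symm

/-- Uniqueness of the derivative set of the pivot node after coalescence: a lower set of
given cardinality `|U₁| + n` inside the column-bounded region, containing the lower set
`U₁` and filling columns greedily in order, is unique. -/
theorem lowerSet_coalescence_unique (K T L m n : ℕ)
    (hK : 1 ≤ K) (hT : 1 ≤ T) (hm : 1 ≤ m) (hmL : m ≤ L)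
    (U S₁ S₂ : Finset (ℕ × ℕ))
    (hUlow : IsLowerSet (U : Set (ℕ × ℕ)))
    (hU1 : U ⊆ S₁) (hU2 : U ⊆ S₂)
    (hS1reg : S₁ ⊆ region K T L m) (hS2reg : S₂ ⊆ region K T L m)
    (hlow1 : IsLowerSet (S₁ : Set (ℕ × ℕ))) (hlow2 : IsLowerSet (S₂ : Set (ℕ × ℕ)))
    (hg1 : FillsGreedily K T L m S₁) (hg2 : FillsGreedily K T L m S₂)
    (hc1 : S₁.card = U.card + n) (hc2 : S₂.card = U.card + n) :
    S₁ = S₂ :=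
  lowerSet_coalescence_unique_general K T L m n U S₁ S₂ hS1reg hS2reg hlow1 hlow2 hg1 hg2 hc1 hc2
end

section
/- A square matrix M whose rows are indexed by derivative orders (a,b) covering all monomial exponents of a polynomial P(x,y), with row (a,b) consisting of the values ∂^{a+b}/∂x^a∂y^b of each monomial of P evaluated at a single point (x₀,y₀), is triangular up to row/column permutation with nonzero diagonal, and hence nonsingular, provided the characteristic of the field exceeds the degree of P. -/
/-!
Entry `((a,b),(i,j))` vanishes unless `(a,b) ≤ (i,j)` componentwise, hence unless
`(a,b) ≤ (i,j)` lexicographically. So the matrix is upper triangular for the lexicographic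
order on `S`, and its determinant is the product of the diagonal entries `i! j!`, which are
nonzero because `i, j ≤ D`.
-/

open Matrix Nat

theorem Matrix.BlockTriangular.det_of_injective {ι α R : Type*} [Fintype ι] [DecidableEq ι]
    [LinearOrder α] [CommRing R] {M : Matrix ι ι R} {f : ι → α}
    (hM : M.BlockTriangular f) (hf : Function.Injective f) : M.det = ∏ i, M i i := by
  let : LinearOrder ι := LinearOrder.lift' f hf
  convert det_of_isUpperTriangular (M := M) fun i j hji => hM hji

theorem natCast_factorial_ne_zero {R : Type*} [Semiring R] [NoZeroDivisors R] [Nontrivial R]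
    {D m : ℕ} (hchar : ∀ n : ℕ, 0 < n → n ≤ D → (n : R) ≠ 0) (hm : m ≤ D) : (m ! : R) ≠ 0 := by
  induction m with
  | zero => simp
  | succ k ih =>
    rw [factorial_succ, cast_mul]
    exact mul_ne_zero (hchar _ k.succ_pos hm) (ih (by omega))

section monomialDerivMatrix

variable {R : Type*} [CommRing R] (S : Finset (ℕ × ℕ)) (x₀ y₀ : R)

def monomialDerivMatrix : Matrix S S R := fun ab ij =>
  if ab.val.1 ≤ ij.val.1 ∧ ab.val.2 ≤ ij.val.2 then
    ((descFactorial ij.val.1 ab.val.1 * descFactorial ij.val.2 ab.val.2 : ℕ) : R)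
      * x₀ ^ (ij.val.1 - ab.val.1) * y₀ ^ (ij.val.2 - ab.val.2)
  else 0

theorem monomialDerivMatrix_blockTriangular :
    (monomialDerivMatrix S x₀ y₀).BlockTriangular (toLex ∘ Subtype.val) :=
  fun _ _ hlt => if_neg fun hle => hlt.not_ge (Prod.Lex.toLex_mono (Prod.mk_le_mk.2 hle))

theorem monomialDerivMatrix_apply_self (p : S) :
    monomialDerivMatrix S x₀ y₀ p p = ((p.val.1 ! * p.val.2 ! : ℕ) : R) := by
  simp [monomialDerivMatrix, descFactorial_self]

end monomialDerivMatrix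

theorem derivative_matrix_nonsingular_general {F : Type*} [Field F]
    (S : Finset (ℕ × ℕ)) (D : ℕ)
    (hdeg : ∀ p ∈ S, p.1 + p.2 ≤ D)
    (hchar : ∀ n : ℕ, 0 < n → n ≤ D → (n : F) ≠ 0)
    (x₀ y₀ : F) :
    Matrix.det (fun ab ij : {p // p ∈ S} =>
      if ab.val.1 ≤ ij.val.1 ∧ ab.val.2 ≤ ij.val.2 then
        ((Nat.descFactorial ij.val.1 ab.val.1 * Nat.descFactorial ij.val.2 ab.val.2 : ℕ) : F)
          * x₀ ^ (ij.val.1 - ab.val.1) * y₀ ^ (ij.val.2 - ab.val.2)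
      else 0) ≠ 0 := by
  change (monomialDerivMatrix S x₀ y₀).det ≠ 0
  rw [(monomialDerivMatrix_blockTriangular S x₀ y₀).det_of_injective
    (toLex.injective.comp Subtype.val_injective)]
  refine Finset.prod_ne_zero_iff.2 fun p _ => ?_
  have hp := hdeg p p.2
  rw [monomialDerivMatrix_apply_self, cast_mul]
  exact mul_ne_zero (natCast_factorial_ne_zero hchar (by omega))
    (natCast_factorial_ne_zero hchar (by omega))

/-- A square matrix whose rows are indexed by derivative orders `(a,b)` covering all
monomial exponents `(i,j) ∈ S` of a polynomial, with entry
`∂_x^a ∂_y^b (x^i y^j)|_{(x₀,y₀)} = (i!/(i−a)!)(j!/(j−b)!) x₀^{i−a} y₀^{j−b}`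
(and `0` when `a > i` or `b > j`), is triangular up to permutation with nonzero diagonal,
hence nonsingular, provided the field characteristic exceeds the degree of the
polynomial (here: every `0 < n ≤ D` is nonzero in `F`, where all total degrees are
`≤ D`). -/
theorem derivative_matrix_nonsingular {F : Type*} [Field F] [DecidableEq F]
    (S : Finset (ℕ × ℕ)) (D : ℕ)
    (hdeg : ∀ p ∈ S, p.1 + p.2 ≤ D)
    (hchar : ∀ n : ℕ, 0 < n → n ≤ D → (n : F) ≠ 0)
    (x₀ y₀ : F) :
    Matrix.det (fun ab ij : {p // p ∈ S} =>
      if ab.val.1 ≤ ij.val.1 ∧ ab.val.2 ≤ ij.val.2 then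
        ((Nat.descFactorial ij.val.1 ab.val.1 * Nat.descFactorial ij.val.2 ab.val.2 : ℕ) : F)
          * x₀ ^ (ij.val.1 - ab.val.1) * y₀ ^ (ij.val.2 - ab.val.2)
      else 0) ≠ 0 :=
  derivative_matrix_nonsingular_general S D hdeg hchar x₀ y₀
end
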